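/- arXiv:1503.00892 — 2 statements merged into one kernel-verified Lean document; each statement's English description precedes it below -/
import Mathlib

section
/- Suppose that 𝒜 satisfies the dominated splitting condition and Φ satisfies the strong separation condition. Then there is a constant c₁ > 0 such that for every i ∈ Σ⁺, every x ∈ Λ and every n ≥ 1, if (j₁,…,jₙ) ∈ {1,…,N}ⁿ is the unique word with x ∈ f_{j₁}∘⋯∘f_{jₙ}(Λ) (unique by the SSC), then B^{ss}_{c₁⁻¹ α₂(A_{j₁}⋯A_{jₙ})}(x,i) ⊆ f_{j₁}∘⋯∘f_{jₙ}(Λ) ∩ (x + e_ss(i)) ⊆ B^{ss}_{c₁ α₂(A_{j₁}⋯A_{jₙ})}(x,i), where B^{ss}_r(x,i) = {z ∈ Λ ∩ (x + e_ss(i)) : |z − x| ≤ r}. -/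
open MeasureTheory Filter Metric Set
open scoped ENNReal Topology NNReal

noncomputable section

/-- The Euclidean plane. -/
abbrev E2 := EuclideanSpace ℝ (Fin 2)

/-- View a vector `Fin 2 → ℝ` as a point of the Euclidean plane. -/
def toE2 (v : Fin 2 → ℝ) : E2 := WithLp.toLp 2 v

/-- The largest singular value `α₁(B)` of a `2×2` real matrix, i.e. the operator norm of the
induced linear map on the Euclidean plane. -/
noncomputable def alpha1 (B : Matrix (Fin 2) (Fin 2) ℝ) : ℝ :=
  ‖LinearMap.toContinuousLinearMap (Matrix.toEuclideanLin B)‖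

/-- The smallest singular value `α₂(B)` of a `2×2` real matrix; for a non-singular `2×2`
matrix one has `α₁(B) * α₂(B) = |det B|`. -/
noncomputable def alpha2 (B : Matrix (Fin 2) (Fin 2) ℝ) : ℝ :=
  |B.det| / alpha1 B

/-- Product `A_{w₁} ⋯ A_{wₙ}` of matrices along a finite word `w`. -/
def listProd {N : ℕ} (A : Fin N → Matrix (Fin 2) (Fin 2) ℝ) (w : List (Fin N)) :
    Matrix (Fin 2) (Fin 2) ℝ :=
  (w.map A).prod

/-- `A_{x₀} A_{x₁} ⋯ A_{x_{n-1}}` along an infinite word `x`. -/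
def prodA {N : ℕ} (A : Fin N → Matrix (Fin 2) (Fin 2) ℝ) (x : ℕ → Fin N) (n : ℕ) :
    Matrix (Fin 2) (Fin 2) ℝ :=
  listProd A ((List.range n).map x)

/-- `A_{x_{n-1}} ⋯ A_{x₁} A_{x₀}` along an infinite word `x` (forward dynamical order). -/
def prodRev {N : ℕ} (A : Fin N → Matrix (Fin 2) (Fin 2) ℝ) (x : ℕ → Fin N) (n : ℕ) :
    Matrix (Fin 2) (Fin 2) ℝ :=
  listProd A (((List.range n).reverse).map x)

/-- The dominated splitting condition: `α₁/α₂ ≥ C e^{δ n}` for all words of length `n`. -/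
def DominatedSplitting {N : ℕ} (A : Fin N → Matrix (Fin 2) (Fin 2) ℝ) : Prop :=
  ∃ C > (0:ℝ), ∃ δ > (0:ℝ), ∀ w : List (Fin N),
    C * Real.exp (δ * w.length) ≤ alpha1 (listProd A w) / alpha2 (listProd A w)

/-- The affine map `x ↦ A_i x + t_i`. -/
def affIFS {N : ℕ} (A : Fin N → Matrix (Fin 2) (Fin 2) ℝ) (t : Fin N → E2)
    (i : Fin N) (x : E2) : E2 :=
  toE2 ((A i).mulVec x) + t i

/-- Composition `f_{w₁} ∘ ⋯ ∘ f_{wₙ}` along a finite word. -/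
def mapWord {N : ℕ} (f : Fin N → E2 → E2) (w : List (Fin N)) : E2 → E2 :=
  w.foldr (fun i g => f i ∘ g) id

/-- The strong separation condition for an IFS on the plane. -/
def SSC {N : ℕ} (f : Fin N → E2 → E2) : Prop :=
  ∃ O : Set E2, IsOpen O ∧ O.Nonempty ∧ Bornology.IsBounded O ∧
    (∀ i, f i '' closure O ⊆ O) ∧
    Pairwise fun i j => Disjoint (f i '' closure O) (f j '' closure O)

/-- `Λ` is the attractor of the IFS `f`: the (unique) nonempty compact set with
`Λ = ⋃ i f_i(Λ)`. -/
def IsAttractor {N : ℕ} (f : Fin N → E2 → E2) (Λ : Set E2) : Prop :=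
  IsCompact Λ ∧ Λ.Nonempty ∧ Λ = ⋃ i, f i '' Λ

/-- The natural projection `π₊(i) = ∑ₙ A_{i₀}⋯A_{i_{n-1}} t_{iₙ} = lim f_{i₀}∘⋯∘f_{iₙ}(0)`. -/
noncomputable def piPlus {N : ℕ} (A : Fin N → Matrix (Fin 2) (Fin 2) ℝ)
    (t : Fin N → E2) (x : ℕ → Fin N) : E2 :=
  ∑' n, toE2 ((prodA A x n).mulVec (t (x n)))

/-- `ν` is the Bernoulli product measure with marginal `p` on `Σ⁺ = {1,…,N}^ℕ`,
characterized by its values on cylinder sets. -/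
def IsBernoulli {N : ℕ} (p : Fin N → ℝ) (ν : Measure (ℕ → Fin N)) : Prop :=
  ∀ (n : ℕ) (w : Fin n → Fin N),
    ν {x | ∀ k : Fin n, x k.val = w k} = ∏ k, ENNReal.ofReal (p (w k))

/-- The entropy `h_ν = -∑ p_i log p_i` of the Bernoulli measure with marginal `p`. -/
noncomputable def entropy {N : ℕ} (p : Fin N → ℝ) : ℝ := -∑ i, p i * Real.log (p i)

/-- The Hausdorff dimension of a measure: `dim_H m = inf { dim_H s : m(sᶜ) = 0 }`. -/
noncomputable def mdimH {X : Type*} [EMetricSpace X] {mX : MeasurableSpace X}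
    (m : Measure X) : ℝ≥0∞ :=
  ⨅ (s : Set X) (_ : m sᶜ = 0), dimH s

/-- A measure is exact dimensional with dimension `d` if the local dimension
`lim_{r→0⁺} log m(B_r(x)) / log r` exists and equals `d` at `m`-a.e. point. -/
def IsExactDimensional {X : Type*} [PseudoMetricSpace X] {mX : MeasurableSpace X}
    (m : Measure X) (d : ℝ) : Prop :=
  ∀ᵐ z ∂m, Tendsto (fun r : ℝ => Real.log (m (Metric.ball z r)).toReal / Real.log r)
    (𝓝[>] (0:ℝ)) (𝓝 d)

/-- `χs ≤ χss` are the Lyapunov exponents of `(A, ν)`: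
`(1/n) log α₁(A_{x₀}⋯A_{x_{n-1}}) → -χs` and `(1/n) log α₂(A_{x₀}⋯A_{x_{n-1}}) → -χss`
for `ν`-a.e. `x`. -/
def LyapunovExponents {N : ℕ} (A : Fin N → Matrix (Fin 2) (Fin 2) ℝ)
    (ν : Measure (ℕ → Fin N)) (χs χss : ℝ) : Prop :=
  0 < χs ∧ χs ≤ χss ∧
  (∀ᵐ x ∂ν, Tendsto (fun n : ℕ => Real.log (alpha1 (prodA A x n)) / n) atTop (𝓝 (-χs))) ∧
  (∀ᵐ x ∂ν, Tendsto (fun n : ℕ => Real.log (alpha2 (prodA A x n)) / n) atTop (𝓝 (-χss)))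

/-- The Lyapunov dimension `min {2, h/χs, 1 + (h - χs)/χss}`. -/
noncomputable def dimLyap {N : ℕ} (p : Fin N → ℝ) (χs χss : ℝ) : ℝ :=
  min 2 (min (entropy p / χs) (1 + (entropy p - χs) / χss))

/-- Left shift on `Σ⁺`. -/
def shift {N : ℕ} (x : ℕ → Fin N) : ℕ → Fin N := fun n => x (n + 1)

/-- `ess` is the family of strong-stable directions of `A`: a family of lines,
equivariant (`A_{x₀} e_ss(x) = e_ss(σx)`), along which the products `A_{x_{n-1}}⋯A_{x₀}`
contract at a rate exponentially faster than `α₁`; this characterizes the strong-stable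
directions `e_ss(x) = ⋂ₙ A_{x₀}⁻¹⋯A_{x_{n-1}}⁻¹(cl Mᶜ)` obtained from a forward-invariant
multicone `M` under the dominated splitting condition. -/
def IsStrongStableDirections {N : ℕ} (A : Fin N → Matrix (Fin 2) (Fin 2) ℝ)
    (ess : (ℕ → Fin N) → Submodule ℝ E2) : Prop :=
  (∀ x, Module.finrank ℝ (ess x) = 1) ∧
  (∀ x, Submodule.map (Matrix.toEuclideanLin (A (x 0))) (ess x) = ess (shift x)) ∧
  ∃ C > (0:ℝ), ∃ δ > (0:ℝ), ∀ (x : ℕ → Fin N) (n : ℕ), ∀ v ∈ ess x,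
    ‖toE2 ((prodRev A x n).mulVec v)‖ ≤ C * Real.exp (-δ * n) * alpha1 (prodRev A x n) * ‖v‖

/-- Orthogonal projection of the plane onto the line through the origin
perpendicular to the line `ℓ`. -/
noncomputable def projPerp (ℓ : Submodule ℝ E2) (v : E2) : E2 :=
  (ℓᗮ.orthogonalProjectionOnto v : E2)

/-- The unit vector with angle `θ`. -/
noncomputable def dirVec (θ : ℝ) : E2 := toE2 ![Real.cos θ, Real.sin θ]

/-- The line through the origin with angle `θ`;
angles in `[0,π)` parametrize the projective space `P¹`. -/
noncomputable def lineOf (θ : ℝ) : Submodule ℝ E2 := Submodule.span ℝ {dirVec θ}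

/-- The standard positive cone `{(x,y) ≠ 0 : xy ≥ 0}`. -/
def StdPosCone : Set E2 := {v | v ≠ 0 ∧ 0 ≤ v 0 * v 1}

/-- A multicone: a finite disjoint union of cones (images of the standard positive cone
under linear isomorphisms). -/
def IsMulticone (M : Set E2) : Prop :=
  ∃ (k : ℕ) (T : Fin k → E2 ≃ₗ[ℝ] E2),
    M = (⋃ j, T j '' StdPosCone) ∧
    Pairwise fun j j' => Disjoint (T j '' StdPosCone) ((T j') '' StdPosCone)

/-- The backward non-overlapping condition: the inverse matrices map the interior of some
multicone `M` into itself with pairwise disjoint images. -/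
def BackwardNonOverlapping {N : ℕ} (A : Fin N → Matrix (Fin 2) (Fin 2) ℝ) : Prop :=
  ∃ M : Set E2, IsMulticone M ∧
    (∀ i, (fun v : E2 => toE2 ((A i)⁻¹.mulVec v)) '' interior M ⊆ interior M) ∧
    Pairwise fun i j => Disjoint ((fun v : E2 => toE2 ((A i)⁻¹.mulVec v)) '' interior M)
      ((fun v : E2 => toE2 ((A j)⁻¹.mulVec v)) '' interior M)


/-!
In an orthonormal frame adapted to the strong-stable line field, the matrix products
`A_{i_{n-1}} ⋯ A_{i_0}` become upper triangular, with diagonal entries `a_n` (the contraction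
along `e_ss`) and `h_n`, and `|a_n h_n| = |det|`. The hypothesis `a_n ≲ e^{-δn} ‖P_n‖` alone
does not bound the shear entry, but the shear at time `n` is a sum of the ratios `a_k / h_k`
at earlier times, so a strong induction shows `‖P_n‖ ≲ |h_n|`, that is `a_n ≲ α₂(P_n)`:
strong-stable directions are contracted at exactly the rate `α₂`. Applied along the word read
backwards, this bounds the diameter of `f_w(Λ) ∩ (x + e_ss(i))` by `α₂(A_w) diam Λ`.

Conversely, the strong separation condition gives a gap `g > 0` between the images of `cl O`
under different maps. Two points of `Λ` in different cylinders of generation `|w|` have a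
common prefix `u` followed by different letters, so they are at distance at least
`g α₂(A_u) ≥ g α₂(A_w)`.
-/

open scoped Matrix Matrix.Norms.L2Operator

namespace Matrix

theorem abs_apply_le_l2_opNorm {n : Type*} [Fintype n] [DecidableEq n] (B : Matrix n n ℝ)
    (i j : n) : |B i j| ≤ ‖B‖ := by
  have h := l2_opNorm_mulVec B (EuclideanSpace.single j 1)
  simp only [PiLp.norm_single, norm_one, mul_one] at h
  refine le_trans ?_ h
  simpa [mulVec_single] using
    PiLp.norm_apply_le ((EuclideanSpace.equiv n ℝ).symm (B *ᵥ EuclideanSpace.single j 1)) i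

theorem l2_opNorm_le_of_apply_one_zero {B : Matrix (Fin 2) (Fin 2) ℝ} (hB : B 1 0 = 0) :
    ‖B‖ ≤ |B 0 0| + |B 0 1| + |B 1 1| := by
  rw [l2_opNorm_def]
  refine ContinuousLinearMap.opNorm_le_bound _ (by positivity) fun v => ?_
  rw [← sq_le_sq₀ (norm_nonneg _) (by positivity), mul_pow, EuclideanSpace.norm_sq_eq,
    EuclideanSpace.norm_sq_eq]
  simp only [LinearEquiv.trans_apply, LinearMap.coe_toContinuousLinearMap', ofLp_toLpLin,
    toLin'_apply, mulVec, dotProduct, Fin.sum_univ_two, Real.norm_eq_abs, sq_abs, hB, zero_mul,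
    zero_add]
  set a := B 0 0; set c := B 0 1; set h := B 1 1
  set x := v.ofLp 0; set y := v.ofLp 1
  have hsq : a ^ 2 + c ^ 2 + h ^ 2 ≤ (|a| + |c| + |h|) ^ 2 := by
    nlinarith [sq_abs a, sq_abs c, sq_abs h, abs_nonneg a, abs_nonneg c, abs_nonneg h,
      mul_nonneg (abs_nonneg a) (abs_nonneg c), mul_nonneg (abs_nonneg a) (abs_nonneg h),
      mul_nonneg (abs_nonneg c) (abs_nonneg h)]
  nlinarith [sq_nonneg (a * y - c * x), sq_nonneg x, sq_nonneg y,
    mul_le_mul_of_nonneg_right hsq (add_nonneg (sq_nonneg x) (sq_nonneg y))]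

theorem rotation_mem_unitary : !![(0 : ℝ), -1; 1, 0] ∈ unitary (Matrix (Fin 2) (Fin 2) ℝ) := by
  rw [← unitaryGroup, mem_unitaryGroup_iff]
  ext i j
  fin_cases i <;> fin_cases j <;> simp [mul_apply, Fin.sum_univ_two, star_eq_conjTranspose]

theorem adjugate_fin_two_eq_star_mul_mul (B : Matrix (Fin 2) (Fin 2) ℝ) :
    B.adjugate = star !![0, -1; 1, 0] * star B * !![0, -1; 1, 0] := by
  ext i j
  fin_cases i <;> fin_cases j <;>
    simp [adjugate_fin_two, mul_apply, Fin.sum_univ_two, star_eq_conjTranspose]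

theorem l2_opNorm_adjugate_fin_two (B : Matrix (Fin 2) (Fin 2) ℝ) : ‖B.adjugate‖ = ‖B‖ := by
  rw [adjugate_fin_two_eq_star_mul_mul, CStarRing.norm_mul_mem_unitary _ rotation_mem_unitary,
    CStarRing.norm_mem_unitary_mul _ (Unitary.star_mem rotation_mem_unitary), norm_star]

section Unitary

variable {U V : Matrix (Fin 2) (Fin 2) ℝ} (hU : U ∈ unitary _) (hV : V ∈ unitary _)
  (B : Matrix (Fin 2) (Fin 2) ℝ)
include hU hV

theorem l2_opNorm_star_mul_mul : ‖star V * B * U‖ = ‖B‖ := by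
  rw [CStarRing.norm_mul_mem_unitary _ hU, CStarRing.norm_mem_unitary_mul _ (Unitary.star_mem hV)]

theorem abs_det_star_mul_mul : |(star V * B * U).det| = |B.det| := by
  have habs : ∀ W ∈ unitary (Matrix (Fin 2) (Fin 2) ℝ), |W.det| = 1 := fun W hW => by
    rw [← Real.norm_eq_abs]
    exact CStarRing.norm_of_mem_unitary (det_of_mem_unitary hW)
  rw [det_mul, det_mul, abs_mul, abs_mul, habs U hU, habs _ (Unitary.star_mem hV), one_mul,
    mul_one]

end Unitary

end Matrix

theorem alpha1_eq_l2_opNorm (B : Matrix (Fin 2) (Fin 2) ℝ) : alpha1 B = ‖B‖ := rfl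

theorem norm_toE2_mulVec_le (B : Matrix (Fin 2) (Fin 2) ℝ) (x : E2) :
    ‖toE2 (B *ᵥ x)‖ ≤ ‖B‖ * ‖x‖ :=
  B.l2_opNorm_mulVec x

theorem abs_det_mul_norm_le (B : Matrix (Fin 2) (Fin 2) ℝ) (x : E2) :
    |B.det| * ‖x‖ ≤ ‖B‖ * ‖toE2 (B *ᵥ x)‖ := by
  have h : B.det • x = toE2 (B.adjugate *ᵥ (B *ᵥ x)) := by
    rw [Matrix.mulVec_mulVec, Matrix.adjugate_mul, Matrix.smul_mulVec, Matrix.one_mulVec]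
    rfl
  calc |B.det| * ‖x‖ = ‖B.det • x‖ := by rw [norm_smul, Real.norm_eq_abs]
    _ ≤ ‖B.adjugate‖ * ‖toE2 (B *ᵥ x)‖ := by
        rw [h]; exact norm_toE2_mulVec_le B.adjugate (toE2 (B *ᵥ x))
    _ = ‖B‖ * ‖toE2 (B *ᵥ x)‖ := by rw [Matrix.l2_opNorm_adjugate_fin_two]

theorem alpha2_nonneg (B : Matrix (Fin 2) (Fin 2) ℝ) : 0 ≤ alpha2 B :=
  div_nonneg (abs_nonneg _) (norm_nonneg _)

theorem alpha2_pos {B : Matrix (Fin 2) (Fin 2) ℝ} (hB : B.det ≠ 0) : 0 < alpha2 B := by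
  have hB0 : B ≠ 0 := by rintro rfl; simp at hB
  rw [alpha2, alpha1_eq_l2_opNorm]
  exact div_pos (abs_pos.mpr hB) (norm_pos_iff.mpr hB0)

theorem alpha2_mul_norm_le (B : Matrix (Fin 2) (Fin 2) ℝ) (x : E2) :
    alpha2 B * ‖x‖ ≤ ‖toE2 (B *ᵥ x)‖ := by
  rw [alpha2, alpha1_eq_l2_opNorm]
  rcases (norm_nonneg B).eq_or_lt with hB | hB
  · rw [← hB, div_zero, zero_mul]; exact norm_nonneg _
  · rw [div_mul_eq_mul_div, div_le_iff₀ hB, mul_comm _ ‖B‖]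
    exact abs_det_mul_norm_le B x

theorem alpha2_mul_le (B C : Matrix (Fin 2) (Fin 2) ℝ) :
    alpha2 (B * C) ≤ alpha2 B * alpha1 C := by
  have key : |C.det| * ‖B‖ ≤ ‖B * C‖ * ‖C‖ := by
    have h : B * C * C.adjugate = C.det • B := by
      rw [mul_assoc, Matrix.mul_adjugate, Matrix.mul_smul, Matrix.mul_one]
    calc |C.det| * ‖B‖ = ‖B * C * C.adjugate‖ := by rw [h, norm_smul, Real.norm_eq_abs]
      _ ≤ ‖B * C‖ * ‖C.adjugate‖ := Matrix.l2_opNorm_mul _ _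
      _ = ‖B * C‖ * ‖C‖ := by rw [Matrix.l2_opNorm_adjugate_fin_two]
  simp only [alpha2, alpha1_eq_l2_opNorm, Matrix.det_mul, abs_mul]
  rcases (norm_nonneg (B * C)).eq_or_lt with hBC | hBC
  · rw [← hBC, div_zero]; positivity
  rcases (norm_nonneg B).eq_or_lt with hB | hB
  · rw [(norm_eq_zero.mp hB.symm : B = 0)]; simp
  rw [div_mul_eq_mul_div, div_le_div_iff₀ hBC hB, mul_assoc, mul_assoc]
  exact mul_le_mul_of_nonneg_left (by linarith [key]) (abs_nonneg _)

theorem alpha2_star_mul_mul {U V : Matrix (Fin 2) (Fin 2) ℝ} (hU : U ∈ unitary _)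
    (hV : V ∈ unitary _) (B : Matrix (Fin 2) (Fin 2) ℝ) : alpha2 (star V * B * U) = alpha2 B := by
  rw [alpha2, alpha2, alpha1_eq_l2_opNorm, alpha1_eq_l2_opNorm,
    Matrix.l2_opNorm_star_mul_mul hU hV, Matrix.abs_det_star_mul_mul hU hV]

theorem abs_apply_zero_zero_le_mul_alpha2 {B : Matrix (Fin 2) (Fin 2) ℝ} {K : ℝ}
    (hB : B 1 0 = 0) (hK : ‖B‖ ≤ K * |B 1 1|) : |B 0 0| ≤ K * alpha2 B := by
  rw [alpha2, alpha1_eq_l2_opNorm, Matrix.det_fin_two, hB, mul_zero, sub_zero]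
  rcases (norm_nonneg B).eq_or_lt with h0 | h0
  · simp [norm_eq_zero.mp h0.symm]
  · rw [mul_div_assoc', le_div_iff₀ h0, abs_mul]
    calc |B 0 0| * ‖B‖ ≤ |B 0 0| * (K * |B 1 1|) := mul_le_mul_of_nonneg_left hK (abs_nonneg _)
      _ = K * (|B 0 0| * |B 1 1|) := by ring

section Cocycle

variable {X G : Type*} (T : X → X)

def cocycle [Monoid G] (M : X → G) : ℕ → X → G
  | 0, _ => 1
  | n + 1, x => cocycle M n (T x) * M x

variable {T}

theorem cocycle_add [Monoid G] (M : X → G) (m n : ℕ) (x : X) :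
    cocycle T M (m + n) x = cocycle T M m (T^[n] x) * cocycle T M n x := by
  induction n generalizing x with
  | zero => simp [cocycle]
  | succ n ih => rw [← add_assoc, cocycle, ih, cocycle, mul_assoc, Function.iterate_succ_apply]

theorem cocycle_star_mul_mul [Monoid G] [StarMul G] (M U : X → G) (hU : ∀ x, U x ∈ unitary G)
    (n : ℕ) (x : X) :
    cocycle T (fun x => star (U (T x)) * M x * U x) n x
      = star (U (T^[n] x)) * cocycle T M n x * U x := by
  induction n generalizing x with
  | zero => simp [cocycle, Unitary.star_mul_self_of_mem (hU x)]
  | succ n ih =>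
    rw [cocycle, cocycle, ih, Function.iterate_succ_apply]
    simp only [mul_assoc]
    rw [← mul_assoc (U (T x)), Unitary.mul_star_self_of_mem (hU (T x)), one_mul]

theorem map_cocycle_eq (M : X → Matrix (Fin 2) (Fin 2) ℝ) {V : X → Submodule ℝ E2}
    (hV : ∀ x, (V x).map (Matrix.toEuclideanLin (M x)) = V (T x)) (n : ℕ) (x : X) :
    (V x).map (Matrix.toEuclideanLin (cocycle T M n x)) = V (T^[n] x) := by
  induction n generalizing x with
  | zero => ext; simp [cocycle]
  | succ n ih =>
    have hmul : Matrix.toEuclideanLin (cocycle T M n (T x) * M x)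
        = (Matrix.toEuclideanLin (cocycle T M n (T x))).comp (Matrix.toEuclideanLin (M x)) :=
      LinearMap.ext fun v => by simp
    rw [cocycle, hmul, Submodule.map_comp, hV, ih]
    rfl

end Cocycle

theorem sum_range_ite_pow_le {m n : ℕ} {q θ c : ℝ} (hq : 0 ≤ q) (hθ0 : 0 ≤ θ) (hθ1 : θ < 1)
    (hc : 0 ≤ c) :
    ∑ k ∈ Finset.range n, (if k < m then q ^ k else c * θ ^ k)
      ≤ ∑ k ∈ Finset.range m, q ^ k + c * (θ ^ m / (1 - θ)) := by
  set b := fun k => if k < m then q ^ k else c * θ ^ k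
  have hb : ∀ k, 0 ≤ b k := fun k => by by_cases hk : k < m <;> simp [b, hk] <;> positivity
  calc ∑ k ∈ Finset.range n, b k ≤ ∑ k ∈ Finset.range (max m n), b k :=
        Finset.sum_le_sum_of_subset_of_nonneg (by simp) fun k _ _ => hb k
    _ = ∑ k ∈ Finset.range m, q ^ k + c * ∑ k ∈ Finset.Ico m (max m n), θ ^ k := by
        rw [← Finset.sum_range_add_sum_Ico _ (le_max_left m n), Finset.mul_sum]
        congr 1
        · exact Finset.sum_congr rfl fun k hk => if_pos (Finset.mem_range.mp hk)
        · exact Finset.sum_congr rfl fun k hk => if_neg (Finset.mem_Ico.mp hk).1.not_gt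
    _ ≤ _ := by gcongr; exact geom_sum_Ico_le_of_lt_one hθ0 hθ1

section UpperTriangular

variable {X : Type*} {T : X → X} {M : X → Matrix (Fin 2) (Fin 2) ℝ} {Q : ℝ}

theorem pos_of_sq_l2_opNorm_le {B : Matrix (Fin 2) (Fin 2) ℝ} (hdet : B.det ≠ 0)
    (hQ : ‖B‖ ^ 2 ≤ Q * |B.det|) : 0 < Q := by
  have hB : B ≠ 0 := by rintro rfl; simp at hdet
  exact pos_of_mul_pos_left ((by positivity : 0 < ‖B‖ ^ 2).trans_le hQ) (abs_nonneg _)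

theorem abs_apply_le_of_sq_l2_opNorm_le {B : Matrix (Fin 2) (Fin 2) ℝ} (hB : B 1 0 = 0)
    (hdet : B.det ≠ 0) (hQ : ‖B‖ ^ 2 ≤ Q * |B.det|) :
    |B 0 0| ≤ Q * |B 1 1| ∧ |B 0 1| ≤ Q * |B 1 1| := by
  rw [Matrix.det_fin_two, hB, mul_zero, sub_zero] at hdet hQ
  have h00 : 0 < |B 0 0| := abs_pos.mpr (left_ne_zero_of_mul hdet)
  have hsq : ‖B‖ ^ 2 ≤ Q * |B 1 1| * |B 0 0| := by rw [abs_mul] at hQ; linarith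
  constructor
  · refine le_of_mul_le_mul_right ?_ h00
    nlinarith [Matrix.abs_apply_le_l2_opNorm B 0 0, abs_nonneg (B 0 0)]
  · refine le_of_mul_le_mul_right ?_ h00
    nlinarith [Matrix.abs_apply_le_l2_opNorm B 0 0, Matrix.abs_apply_le_l2_opNorm B 0 1,
      abs_nonneg (B 0 0), abs_nonneg (B 0 1)]

theorem cocycle_apply_one_zero (htri : ∀ x, M x 1 0 = 0) (n : ℕ) (x : X) :
    cocycle T M n x 1 0 = 0 := by
  induction n generalizing x with
  | zero => simp [cocycle]
  | succ n ih => simp [cocycle, Matrix.mul_apply, Fin.sum_univ_two, ih, htri]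

theorem cocycle_succ_apply_zero_zero (htri : ∀ x, M x 1 0 = 0) (n : ℕ) (x : X) :
    cocycle T M (n + 1) x 0 0 = cocycle T M n (T x) 0 0 * M x 0 0 := by
  simp [cocycle, Matrix.mul_apply, Fin.sum_univ_two, htri]

theorem cocycle_succ_apply_one_one (htri : ∀ x, M x 1 0 = 0) (n : ℕ) (x : X) :
    cocycle T M (n + 1) x 1 1 = cocycle T M n (T x) 1 1 * M x 1 1 := by
  simp [cocycle, Matrix.mul_apply, Fin.sum_univ_two, cocycle_apply_one_zero htri]

theorem cocycle_succ_apply_zero_one (n : ℕ) (x : X) :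
    cocycle T M (n + 1) x 0 1
      = cocycle T M n (T x) 0 0 * M x 0 1 + cocycle T M n (T x) 0 1 * M x 1 1 := by
  simp [cocycle, Matrix.mul_apply, Fin.sum_univ_two]

variable (htri : ∀ x, M x 1 0 = 0) (hdet : ∀ x, (M x).det ≠ 0)
  (hQ : ∀ x, ‖M x‖ ^ 2 ≤ Q * |(M x).det|)
include htri hdet hQ

theorem abs_cocycle_apply_zero_zero_le (n : ℕ) (x : X) :
    |cocycle T M n x 0 0| ≤ Q ^ n * |cocycle T M n x 1 1| := by
  induction n generalizing x with
  | zero => simp [cocycle]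
  | succ n ih =>
    rw [cocycle_succ_apply_zero_zero htri, cocycle_succ_apply_one_one htri, abs_mul, abs_mul]
    have h := (abs_apply_le_of_sq_l2_opNorm_le (htri x) (hdet x) (hQ x)).1
    have hQ0 := pos_of_sq_l2_opNorm_le (hdet x) (hQ x)
    calc |cocycle T M n (T x) 0 0| * |M x 0 0|
        ≤ (Q ^ n * |cocycle T M n (T x) 1 1|) * (Q * |M x 1 1|) :=
          mul_le_mul (ih _) h (abs_nonneg _) (by positivity)
      _ = Q ^ (n + 1) * (|cocycle T M n (T x) 1 1| * |M x 1 1|) := by ring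

theorem abs_cocycle_apply_zero_one_le (b : ℕ → ℝ) (n : ℕ)
    (hb : ∀ k < n, ∀ x, |cocycle T M k x 0 0| ≤ b k * |cocycle T M k x 1 1|) (x : X) :
    |cocycle T M n x 0 1| ≤ Q * (∑ k ∈ Finset.range n, b k) * |cocycle T M n x 1 1| := by
  induction n generalizing x with
  | zero => simp [cocycle]
  | succ n ih =>
    have ih' := ih (fun k hk => hb k (Nat.lt_succ_of_lt hk)) (T x)
    have hn := hb n n.lt_succ_self (T x)
    have h01 := (abs_apply_le_of_sq_l2_opNorm_le (htri x) (hdet x) (hQ x)).2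
    rw [cocycle_succ_apply_zero_one, cocycle_succ_apply_one_one htri, Finset.sum_range_succ]
    calc |cocycle T M n (T x) 0 0 * M x 0 1 + cocycle T M n (T x) 0 1 * M x 1 1|
        ≤ |cocycle T M n (T x) 0 0| * |M x 0 1| + |cocycle T M n (T x) 0 1| * |M x 1 1| := by
          rw [← abs_mul, ← abs_mul]; exact abs_add_le _ _
      _ ≤ (b n * |cocycle T M n (T x) 1 1|) * (Q * |M x 1 1|)
          + (Q * (∑ k ∈ Finset.range n, b k) * |cocycle T M n (T x) 1 1|) * |M x 1 1| := by
          gcongr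
          exact (abs_nonneg _).trans hn
      _ = Q * (∑ k ∈ Finset.range n, b k + b n) * |cocycle T M n (T x) 1 1 * M x 1 1| := by
          rw [abs_mul]; ring

/-- Before time `m` the ratio `|P₀₀| / |P₁₁|` is at most `Q ^ k`; afterwards `hcontr` and the
induction hypothesis make it at most `C * B * θ ^ k`. -/
theorem abs_cocycle_apply_zero_one_le_of_forall_lt {C θ B : ℝ} {m n : ℕ} (hθ0 : 0 ≤ θ)
    (hθ1 : θ < 1) (hC : 0 ≤ C)
    (hcontr : ∀ n x, |cocycle T M n x 0 0| ≤ C * θ ^ n * ‖cocycle T M n x‖)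
    (hm : Q * (C * (θ ^ m / (1 - θ))) ≤ 1 / 4) (hB : 0 ≤ B)
    (ih : ∀ k < n, ∀ x, ‖cocycle T M k x‖ ≤ B * |cocycle T M k x 1 1|) (x : X) :
    |cocycle T M n x 0 1| ≤ (Q * ∑ k ∈ Finset.range m, Q ^ k + B / 4) * |cocycle T M n x 1 1| := by
  set P := cocycle T M
  have hQ0 := pos_of_sq_l2_opNorm_le (hdet x) (hQ x)
  have hb : ∀ k < n, ∀ x,
      |P k x 0 0| ≤ (if k < m then Q ^ k else C * B * θ ^ k) * |P k x 1 1| := by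
    intro k hk x
    split_ifs with hkm
    · exact abs_cocycle_apply_zero_zero_le htri hdet hQ k x
    · calc |P k x 0 0| ≤ C * θ ^ k * ‖P k x‖ := hcontr k x
        _ ≤ C * θ ^ k * (B * |P k x 1 1|) := by gcongr; exact ih k hk x
        _ = C * B * θ ^ k * |P k x 1 1| := by ring
  refine (abs_cocycle_apply_zero_one_le htri hdet hQ _ n hb x).trans
    (mul_le_mul_of_nonneg_right ?_ (abs_nonneg _))
  calc _ ≤ Q * (∑ k ∈ Finset.range m, Q ^ k + C * B * (θ ^ m / (1 - θ))) := by
        gcongr; exact sum_range_ite_pow_le hQ0.le hθ0 hθ1 (by positivity)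
    _ = Q * ∑ k ∈ Finset.range m, Q ^ k + B * (Q * (C * (θ ^ m / (1 - θ)))) := by ring
    _ ≤ _ := by nlinarith [mul_le_mul_of_nonneg_left hm hB]

theorem l2_opNorm_cocycle_le_of_forall_lt {C θ B : ℝ} {m n : ℕ} (hθ0 : 0 ≤ θ) (hθ1 : θ < 1)
    (hC : 0 ≤ C) (hcontr : ∀ n x, |cocycle T M n x 0 0| ≤ C * θ ^ n * ‖cocycle T M n x‖)
    (hm1 : C * θ ^ m ≤ 1 / 2) (hm2 : Q * (C * (θ ^ m / (1 - θ))) ≤ 1 / 4)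
    (hB : 4 * (∑ k ∈ Finset.range m, Q ^ k) * (1 + Q) + 4 ≤ B)
    (ih : ∀ k < n, ∀ x, ‖cocycle T M k x‖ ≤ B * |cocycle T M k x 1 1|) (x : X) :
    ‖cocycle T M n x‖ ≤ B * |cocycle T M n x 1 1| := by
  set P := cocycle T M
  set S := ∑ k ∈ Finset.range m, Q ^ k
  have hQ0 := pos_of_sq_l2_opNorm_le (hdet x) (hQ x)
  have hS : 0 ≤ S := by positivity
  have h01 := abs_cocycle_apply_zero_one_le_of_forall_lt htri hdet hQ hθ0 hθ1 hC hcontr hm2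
    (le_trans (by positivity) hB) ih x
  have hnorm : ‖P n x‖ ≤ |P n x 0 0| + |P n x 0 1| + |P n x 1 1| :=
    Matrix.l2_opNorm_le_of_apply_one_zero (cocycle_apply_one_zero htri n x)
  have hBh := mul_le_mul_of_nonneg_right hB (abs_nonneg (P n x 1 1))
  have hSh := mul_nonneg (mul_nonneg hS hQ0.le) (abs_nonneg (P n x 1 1))
  by_cases hnm : n < m
  · have hQS : Q ^ n ≤ S :=
      Finset.single_le_sum (fun k _ => by positivity) (Finset.mem_range.mpr hnm)
    have h00 : |P n x 0 0| ≤ S * |P n x 1 1| :=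
      (abs_cocycle_apply_zero_zero_le htri hdet hQ n x).trans
        (mul_le_mul_of_nonneg_right hQS (abs_nonneg _))
    nlinarith [abs_nonneg (P n x 1 1)]
  · have h00 : |P n x 0 0| ≤ ‖P n x‖ / 2 :=
      calc |P n x 0 0| ≤ C * θ ^ n * ‖P n x‖ := hcontr n x
        _ ≤ C * θ ^ m * ‖P n x‖ := by
          gcongr C * ?_ * _
          exact pow_le_pow_of_le_one hθ0 hθ1.le (not_lt.mp hnm)
        _ ≤ ‖P n x‖ / 2 := by nlinarith [norm_nonneg (P n x)]
    nlinarith [abs_nonneg (P n x 1 1)]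

theorem exists_l2_opNorm_cocycle_le_mul_abs {C θ : ℝ} (hθ0 : 0 ≤ θ) (hθ1 : θ < 1)
    (hcontr : ∀ n x, |cocycle T M n x 0 0| ≤ C * θ ^ n * ‖cocycle T M n x‖) :
    ∃ K > 0, ∀ n x, ‖cocycle T M n x‖ ≤ K * |cocycle T M n x 1 1| := by
  rcases isEmpty_or_nonempty X with hX | ⟨⟨x₀⟩⟩
  · exact ⟨1, one_pos, fun n x => isEmptyElim x⟩
  have hQ0 : 0 < Q := pos_of_sq_l2_opNorm_le (hdet x₀) (hQ x₀)
  have hC : 0 < C := by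
    have h := hcontr 0 x₀
    simp only [cocycle, Matrix.one_apply_eq, abs_one, pow_zero, mul_one] at h
    exact pos_of_mul_pos_left (one_pos.trans_le h) (norm_nonneg _)
  have hlim : Tendsto (fun m => C * θ ^ m) atTop (𝓝 0) := by
    simpa using (tendsto_pow_atTop_nhds_zero_of_lt_one hθ0 hθ1).const_mul C
  have hθ1' := sub_pos.mpr hθ1
  obtain ⟨m, hm⟩ := (hlim.eventually (ge_mem_nhds
    (show (0 : ℝ) < min (1 / 2) ((1 - θ) / (4 * Q)) by positivity))).exists
  have hm2 : Q * (C * (θ ^ m / (1 - θ))) ≤ 1 / 4 := by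
    have := hm.trans (min_le_right _ _)
    rw [le_div_iff₀ (by positivity)] at this
    rw [← mul_div_assoc, mul_div_assoc', div_le_iff₀ hθ1']
    linarith
  refine ⟨4 * (∑ k ∈ Finset.range m, Q ^ k) * (1 + Q) + 4, by positivity, fun n =>
    Nat.strong_induction_on n fun n ih => l2_opNorm_cocycle_le_of_forall_lt htri hdet hQ hθ0 hθ1
      hC.le hcontr (hm.trans (min_le_left _ _)) hm2 le_rfl ih⟩

end UpperTriangular

theorem Submodule.exists_norm_eq_one_eq_span_singleton {E : Type*} [NormedAddCommGroup E]
    [NormedSpace ℝ E] {S : Submodule ℝ E} (hS : Module.finrank ℝ S = 1) :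
    ∃ u, ‖u‖ = 1 ∧ S = ℝ ∙ u := by
  have hS0 : S ≠ ⊥ := by rintro rfl; simp at hS
  obtain ⟨v, hv, hv0⟩ := Submodule.exists_mem_ne_zero_of_ne_bot hS0
  refine ⟨‖v‖⁻¹ • v, norm_smul_inv_norm hv0, ?_⟩
  exact eq_span_singleton_of_mem_of_finrank_eq_one hS (S.smul_mem _ hv) (by simpa using hv0)

section Frame

def rotFrame (u : E2) : Matrix (Fin 2) (Fin 2) ℝ := !![u 0, -u 1; u 1, u 0]

theorem norm_eq_one_iff_sq_add_sq {u : E2} : ‖u‖ = 1 ↔ u 0 ^ 2 + u 1 ^ 2 = 1 := by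
  rw [← pow_eq_one_iff_of_nonneg (norm_nonneg u) two_ne_zero, EuclideanSpace.norm_sq_eq,
    Fin.sum_univ_two, Real.norm_eq_abs, Real.norm_eq_abs, sq_abs, sq_abs]

theorem rotFrame_mem_unitary {u : E2} (hu : ‖u‖ = 1) :
    rotFrame u ∈ unitary (Matrix (Fin 2) (Fin 2) ℝ) := by
  rw [norm_eq_one_iff_sq_add_sq] at hu
  rw [← Matrix.unitaryGroup, Matrix.mem_unitaryGroup_iff]
  ext i j
  fin_cases i <;> fin_cases j <;>
    simp [rotFrame, Matrix.mul_apply, Fin.sum_univ_two, Matrix.star_eq_conjTranspose] <;>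
    linarith

variable {u v : E2} {B : Matrix (Fin 2) (Fin 2) ℝ}

theorem rotFrame_star_mul_mul_apply_zero_zero :
    (star (rotFrame v) * B * rotFrame u) 0 0 = v 0 * (B *ᵥ u) 0 + v 1 * (B *ᵥ u) 1 := by
  simp only [rotFrame, Matrix.star_eq_conjTranspose, Matrix.conjTranspose_eq_transpose_of_trivial,
    Matrix.mul_apply, Matrix.transpose_apply, Matrix.of_apply, Matrix.cons_val',
    Matrix.cons_val_zero, Matrix.cons_val_fin_one, Fin.sum_univ_two, Matrix.cons_val_one,
    Matrix.mulVec, dotProduct]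
  ring

theorem rotFrame_star_mul_mul_apply_one_zero :
    (star (rotFrame v) * B * rotFrame u) 1 0 = v 0 * (B *ᵥ u) 1 - v 1 * (B *ᵥ u) 0 := by
  simp only [rotFrame, Matrix.star_eq_conjTranspose, Matrix.conjTranspose_eq_transpose_of_trivial,
    Matrix.mul_apply, Matrix.transpose_apply, Matrix.of_apply, Matrix.cons_val',
    Matrix.cons_val_one, Matrix.cons_val_fin_one, Fin.sum_univ_two, Matrix.cons_val_zero, neg_mul,
    Matrix.mulVec, dotProduct]
  ring

theorem rotFrame_star_mul_mul_apply_one_zero_eq_zero (hB : toE2 (B *ᵥ u) ∈ ℝ ∙ v) :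
    (star (rotFrame v) * B * rotFrame u) 1 0 = 0 := by
  obtain ⟨s, hs⟩ := Submodule.mem_span_singleton.mp hB
  rw [rotFrame_star_mul_mul_apply_one_zero, show B *ᵥ u = s • v from congrArg WithLp.ofLp hs.symm]
  simp only [Pi.smul_apply, smul_eq_mul]
  ring

theorem abs_rotFrame_star_mul_mul_apply_zero_zero (hv : ‖v‖ = 1)
    (hB : toE2 (B *ᵥ u) ∈ ℝ ∙ v) :
    |(star (rotFrame v) * B * rotFrame u) 0 0| = ‖toE2 (B *ᵥ u)‖ := by
  obtain ⟨s, hs⟩ := Submodule.mem_span_singleton.mp hB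
  rw [← hs, norm_smul, hv, mul_one, Real.norm_eq_abs, rotFrame_star_mul_mul_apply_zero_zero,
    show B *ᵥ u = s • v from congrArg WithLp.ofLp hs.symm]
  rw [norm_eq_one_iff_sq_add_sq] at hv
  simp only [Pi.smul_apply, smul_eq_mul]
  congr 1
  linear_combination s * hv

end Frame

section StrongStable

variable {X : Type*} {T : X → X} {M : X → Matrix (Fin 2) (Fin 2) ℝ} {Q C θ : ℝ}

theorem exists_norm_cocycle_mulVec_le_alpha2_of_frame {e : X → E2} (he : ∀ x, ‖e x‖ = 1)
    (hdet : ∀ x, (M x).det ≠ 0) (hQ : ∀ x, ‖M x‖ ^ 2 ≤ Q * |(M x).det|)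
    (halign : ∀ n x, toE2 (cocycle T M n x *ᵥ e x) ∈ ℝ ∙ e (T^[n] x))
    (hθ0 : 0 ≤ θ) (hθ1 : θ < 1)
    (hcontr : ∀ n x, ‖toE2 (cocycle T M n x *ᵥ e x)‖ ≤ C * θ ^ n * ‖cocycle T M n x‖) :
    ∃ K > 0, ∀ n x, ‖toE2 (cocycle T M n x *ᵥ e x)‖ ≤ K * alpha2 (cocycle T M n x) := by
  have hU : ∀ x, rotFrame (e x) ∈ unitary _ := fun x => rotFrame_mem_unitary (he x)
  set M' := fun x => star (rotFrame (e (T x))) * M x * rotFrame (e x)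
  have hconj := cocycle_star_mul_mul (T := T) M _ hU
  have htri : ∀ x, M' x 1 0 = 0 := fun x =>
    rotFrame_star_mul_mul_apply_one_zero_eq_zero (by simpa [cocycle] using halign 1 x)
  have h00 : ∀ n x, |cocycle T M' n x 0 0| = ‖toE2 (cocycle T M n x *ᵥ e x)‖ := fun n x => by
    rw [hconj]; exact abs_rotFrame_star_mul_mul_apply_zero_zero (he _) (halign n x)
  have hdet' : ∀ x, (M' x).det ≠ 0 := fun x => by
    rw [← abs_ne_zero, Matrix.abs_det_star_mul_mul (hU x) (hU _), abs_ne_zero]; exact hdet x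
  have hQ' : ∀ x, ‖M' x‖ ^ 2 ≤ Q * |(M' x).det| := fun x => by
    rw [Matrix.l2_opNorm_star_mul_mul (hU x) (hU _),
      Matrix.abs_det_star_mul_mul (hU x) (hU _)]
    exact hQ x
  obtain ⟨K, hK0, hK⟩ := exists_l2_opNorm_cocycle_le_mul_abs htri hdet' hQ' hθ0 hθ1
    fun n x => by rw [h00, hconj, Matrix.l2_opNorm_star_mul_mul (hU x) (hU _)]; exact hcontr n x
  refine ⟨K, hK0, fun n x => ?_⟩
  have hKe := abs_apply_zero_zero_le_mul_alpha2 (cocycle_apply_one_zero htri n x) (hK n x)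
  rwa [h00, hconj, alpha2_star_mul_mul (hU x) (hU _)] at hKe

theorem exists_norm_cocycle_mulVec_le_alpha2 {V : X → Submodule ℝ E2}
    (hdet : ∀ x, (M x).det ≠ 0) (hQ : ∀ x, ‖M x‖ ^ 2 ≤ Q * |(M x).det|)
    (hrank : ∀ x, Module.finrank ℝ (V x) = 1)
    (hV : ∀ x, (V x).map (Matrix.toEuclideanLin (M x)) = V (T x)) (hθ0 : 0 ≤ θ) (hθ1 : θ < 1)
    (hcontr : ∀ n x, ∀ v ∈ V x,
      ‖toE2 (cocycle T M n x *ᵥ v)‖ ≤ C * θ ^ n * ‖cocycle T M n x‖ * ‖v‖) :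
    ∃ K > 0, ∀ n x, ∀ v ∈ V x,
      ‖toE2 (cocycle T M n x *ᵥ v)‖ ≤ K * alpha2 (cocycle T M n x) * ‖v‖ := by
  choose e he hVe using fun x => Submodule.exists_norm_eq_one_eq_span_singleton (hrank x)
  have hmem : ∀ x, e x ∈ V x := fun x => hVe x ▸ Submodule.mem_span_singleton_self _
  obtain ⟨K, hK0, hK⟩ := exists_norm_cocycle_mulVec_le_alpha2_of_frame he hdet hQ
    (fun n x => hVe _ ▸ map_cocycle_eq M hV n x ▸ Submodule.mem_map_of_mem (hmem x)) hθ0 hθ1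
    fun n x => by simpa only [he, mul_one] using hcontr n x (e x) (hmem x)
  refine ⟨K, hK0, fun n x v hv => ?_⟩
  obtain ⟨c, rfl⟩ := Submodule.mem_span_singleton.mp (hVe x ▸ hv)
  calc ‖toE2 (cocycle T M n x *ᵥ (c • e x))‖ = |c| * ‖toE2 (cocycle T M n x *ᵥ e x)‖ := by
        rw [Matrix.mulVec_smul, ← Real.norm_eq_abs, ← norm_smul]; rfl
    _ ≤ |c| * (K * alpha2 (cocycle T M n x)) := by gcongr; exact hK n x
    _ = K * alpha2 (cocycle T M n x) * ‖c • e x‖ := by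
        rw [norm_smul, he, Real.norm_eq_abs]; ring

end StrongStable

section Symbolic

variable {N : ℕ}

theorem prodRev_eq_cocycle (A : Fin N → Matrix (Fin 2) (Fin 2) ℝ) (y : ℕ → Fin N) (n : ℕ) :
    prodRev A y n = cocycle shift (fun y => A (y 0)) n y := by
  induction n generalizing y with
  | zero => rfl
  | succ n ih =>
    rw [cocycle, ← ih]
    simp [prodRev, listProd, List.range_succ_eq_map, List.map_reverse, Function.comp_def, shift]

def prependReverse : List (Fin N) → (ℕ → Fin N) → ℕ → Fin N
  | [], i => i
  | j :: w, i => prependReverse w fun k => match k with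
    | 0 => j
    | k + 1 => i k

theorem shift_iterate_prependReverse (w : List (Fin N)) (i : ℕ → Fin N) :
    shift^[w.length] (prependReverse w i) = i := by
  induction w generalizing i with
  | nil => rfl
  | cons j w ih => rw [List.length_cons, Function.iterate_succ_apply', prependReverse, ih]; rfl

theorem cocycle_prependReverse (A : Fin N → Matrix (Fin 2) (Fin 2) ℝ) (w : List (Fin N))
    (i : ℕ → Fin N) :
    cocycle shift (fun y => A (y 0)) w.length (prependReverse w i) = listProd A w := by
  induction w generalizing i with
  | nil => rfl
  | cons j w ih =>
    rw [List.length_cons, add_comm, cocycle_add, prependReverse, ih, shift_iterate_prependReverse]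
    simp [cocycle, listProd]

theorem det_listProd_ne_zero {A : Fin N → Matrix (Fin 2) (Fin 2) ℝ} (hdet : ∀ i, (A i).det ≠ 0)
    (w : List (Fin N)) : (listProd A w).det ≠ 0 := by
  induction w with
  | nil => simp [listProd]
  | cons j w ih => simpa [listProd, Matrix.det_mul] using ⟨hdet j, ih⟩

theorem exists_sq_l2_opNorm_le_mul_abs_det (A : Fin N → Matrix (Fin 2) (Fin 2) ℝ)
    (hdet : ∀ i, (A i).det ≠ 0) : ∃ Q, ∀ i, ‖A i‖ ^ 2 ≤ Q * |(A i).det| := by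
  obtain ⟨Q, hQ⟩ := Finite.bddAbove_range fun i => ‖A i‖ ^ 2 / |(A i).det|
  refine ⟨Q, fun i => ?_⟩
  rw [← div_le_iff₀ (abs_pos.mpr (hdet i))]
  exact hQ ⟨i, rfl⟩

theorem exists_norm_listProd_mulVec_le_alpha2 {A : Fin N → Matrix (Fin 2) (Fin 2) ℝ}
    {ess : (ℕ → Fin N) → Submodule ℝ E2} (hdet : ∀ i, (A i).det ≠ 0)
    (hess : IsStrongStableDirections A ess) :
    ∃ K > 0, ∀ (i : ℕ → Fin N) (w : List (Fin N)) (v : E2), toE2 (listProd A w *ᵥ v) ∈ ess i →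
      ‖toE2 (listProd A w *ᵥ v)‖ ≤ K * alpha2 (listProd A w) * ‖v‖ := by
  obtain ⟨hrank, hequiv, C, -, δ, hδ, hcontr⟩ := hess
  obtain ⟨Q, hQ⟩ := exists_sq_l2_opNorm_le_mul_abs_det A hdet
  obtain ⟨K, hK0, hK⟩ := exists_norm_cocycle_mulVec_le_alpha2 (T := shift) (M := fun y => A (y 0))
    (fun y => hdet _) (fun y => hQ _) hrank hequiv (Real.exp_pos (-δ)).le
    (Real.exp_lt_one_iff.mpr (neg_lt_zero.mpr hδ)) fun n y v hv => by
      rw [← prodRev_eq_cocycle, ← Real.exp_nat_mul, mul_comm (n : ℝ)]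
      exact hcontr y n v hv
  refine ⟨K, hK0, fun i w v hv => ?_⟩
  have hP := cocycle_prependReverse A w i
  have hmap := map_cocycle_eq _ hequiv w.length (prependReverse w i)
  rw [shift_iterate_prependReverse, hP] at hmap
  rw [← hmap] at hv
  obtain ⟨u, hu, hPu⟩ := hv
  obtain rfl : u = v := by
    have hinj := (Matrix.mulVec_injective_iff_isUnit.mpr
      ((Matrix.isUnit_iff_isUnit_det _).mpr (det_listProd_ne_zero hdet w).isUnit))
    exact WithLp.ofLp_injective 2 (hinj (congrArg WithLp.ofLp hPu))
  simpa [hP] using hK w.length (prependReverse w i) u hu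

end Symbolic

section Separation

theorem subset_of_mapsTo_of_contractingWith {E ι : Type*} [MetricSpace E] {f : ι → E → E}
    {K Λ : Set E} (hK : IsCompact K) (hK0 : K.Nonempty) (hfK : ∀ i, MapsTo (f i) K K)
    (hf : ∀ i, ∃ r, ContractingWith r (f i)) (hΛ : IsCompact Λ) (hΛf : Λ ⊆ ⋃ i, f i '' Λ) :
    Λ ⊆ K := by
  rcases Λ.eq_empty_or_nonempty with rfl | hΛ0
  · exact empty_subset K
  obtain ⟨x₀, hx₀, hmax⟩ :=
    hΛ.exists_isMaxOn hΛ0 (continuous_infDist_pt K).continuousOn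
  obtain ⟨i, x', hx', rfl⟩ := mem_iUnion.mp (hΛf hx₀)
  obtain ⟨r, hr1, hr⟩ := hf i
  obtain ⟨k, hk, hkd⟩ := hK.exists_infDist_eq_dist hK0 x'
  have hle : infDist (f i x') K ≤ r * infDist (f i x') K :=
    calc infDist (f i x') K ≤ dist (f i x') (f i k) := infDist_le_dist_of_mem (hfK i hk)
      _ ≤ r * dist x' k := hr.dist_le_mul x' k
      _ = r * infDist x' K := by rw [hkd]
      _ ≤ r * infDist (f i x') K := by gcongr; exact hmax hx'
  have hzero : infDist (f i x') K = 0 :=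
    le_antisymm (by nlinarith [infDist_nonneg (x := f i x') (s := K),
      (show (r : ℝ) < 1 from hr1)]) infDist_nonneg
  intro x hx
  rw [hK.isClosed.mem_iff_infDist_zero hK0]
  exact le_antisymm ((hmax hx).trans hzero.le) infDist_nonneg

theorem exists_pos_le_dist_of_pairwise_disjoint {E ι : Type*} [MetricSpace E] [Finite ι]
    {S : ι → Set E} (hS : ∀ i, IsCompact (S i)) (hdisj : Pairwise fun i j => Disjoint (S i) (S j)) :
    ∃ g > 0, ∀ i j, i ≠ j → ∀ p ∈ S i, ∀ q ∈ S j, g ≤ dist p q := by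
  have h : ∀ i j, ∀ᶠ g in 𝓝[>] (0 : ℝ), i ≠ j → ∀ p ∈ S i, ∀ q ∈ S j, g ≤ dist p q := by
    intro i j
    by_cases hij : i = j
    · exact Eventually.of_forall fun _ h => (h hij).elim
    obtain ⟨r, hr0, hr⟩ := exists_pos_forall_lt_edist (hS i) (hS j).isClosed (hdisj hij)
    filter_upwards [Ioo_mem_nhdsGT (show (0 : ℝ) < r from hr0)] with g hg _ p hp q hq
    have := hr p hp q hq
    rw [edist_dist, ← ENNReal.ofReal_coe_nnreal] at this
    linarith [hg.2, (ENNReal.ofReal_lt_ofReal_iff_of_nonneg r.coe_nonneg).mp this]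
  obtain ⟨g, hg, hg0⟩ :=
    ((eventually_all.2 fun i => eventually_all.2 (h i)).and self_mem_nhdsWithin).exists
  exact ⟨g, hg0, hg⟩

end Separation

section AffineIFS

variable {N : ℕ} {A : Fin N → Matrix (Fin 2) (Fin 2) ℝ} {t : Fin N → E2}

theorem affIFS_sub (A : Fin N → Matrix (Fin 2) (Fin 2) ℝ) (t : Fin N → E2) (i : Fin N) (x y : E2) :
    affIFS A t i x - affIFS A t i y = toE2 (A i *ᵥ (x - y)) := by
  simp only [affIFS, add_sub_add_right_eq_sub, Matrix.mulVec_sub]; rfl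

theorem mapWord_sub (A : Fin N → Matrix (Fin 2) (Fin 2) ℝ) (t : Fin N → E2) (w : List (Fin N))
    (x y : E2) :
    mapWord (affIFS A t) w x - mapWord (affIFS A t) w y = toE2 (listProd A w *ᵥ (x - y)) := by
  induction w with
  | nil =>
    simp only [mapWord, List.foldr_nil, id_eq, listProd, List.map_nil, List.prod_nil,
      Matrix.one_mulVec]
    rfl
  | cons j w ih =>
    simp only [mapWord, List.foldr_cons, Function.comp_apply] at ih ⊢
    rw [affIFS_sub, ← WithLp.ofLp_sub, ih]
    change toE2 (A j *ᵥ (listProd A w *ᵥ _)) = toE2 ((A j * listProd A w) *ᵥ _)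
    rw [Matrix.mulVec_mulVec]

theorem contractingWith_affIFS (hA : ∀ i, ‖A i‖ < 1) (i : Fin N) :
    ContractingWith ‖A i‖₊ (affIFS A t i) := by
  refine ⟨hA i, LipschitzWith.of_dist_le_mul fun x y => ?_⟩
  rw [dist_eq_norm, dist_eq_norm, affIFS_sub]
  exact norm_toE2_mulVec_le _ _

theorem mapWord_image_subset {f : Fin N → E2 → E2} {Λ : Set E2} (hΛ : Λ = ⋃ i, f i '' Λ)
    (w : List (Fin N)) : mapWord f w '' Λ ⊆ Λ := by
  induction w with
  | nil => simp [mapWord]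
  | cons j w ih =>
    rw [mapWord, List.foldr_cons, image_comp]
    refine (image_mono ih).trans ?_
    conv_rhs => rw [hΛ]
    exact subset_iUnion (fun i => f i '' Λ) j

theorem l2_opNorm_listProd_le_one (hA : ∀ i, ‖A i‖ ≤ 1) (w : List (Fin N)) :
    ‖listProd A w‖ ≤ 1 := by
  induction w with
  | nil => simp [listProd]
  | cons j w ih =>
    calc ‖listProd A (j :: w)‖ = ‖A j * listProd A w‖ := rfl
      _ ≤ ‖A j‖ * ‖listProd A w‖ := Matrix.l2_opNorm_mul _ _
      _ ≤ 1 := mul_le_one₀ (hA j) (norm_nonneg _) ih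

theorem mul_alpha2_le_norm_mulVec_sub_of_notMem {Λ F : Set E2} {g : ℝ} (hA : ∀ i, ‖A i‖ ≤ 1)
    (hΛ : Λ = ⋃ i, affIFS A t i '' Λ) (hΛF : Λ ⊆ F) (hg : 0 ≤ g)
    (hsep : ∀ i j, i ≠ j → ∀ p ∈ affIFS A t i '' F, ∀ q ∈ affIFS A t j '' F, g ≤ dist p q)
    (w : List (Fin N)) (B : Matrix (Fin 2) (Fin 2) ℝ) {x z : E2}
    (hx : x ∈ mapWord (affIFS A t) w '' Λ) (hz : z ∈ Λ) (hzw : z ∉ mapWord (affIFS A t) w '' Λ) :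
    g * alpha2 (B * listProd A w) ≤ ‖toE2 (B *ᵥ (z - x))‖ := by
  induction w generalizing B x z with
  | nil => exact absurd (by simpa [mapWord] using hz) hzw
  | cons j w ih =>
    obtain ⟨x', hx', rfl⟩ := hx
    obtain ⟨i, z', hz', rfl⟩ : ∃ i, ∃ z' ∈ Λ, affIFS A t i z' = z := by
      rw [hΛ] at hz; simpa using hz
    set y := mapWord (affIFS A t) w x'
    change g * alpha2 (B * (A j * listProd A w)) ≤ ‖toE2 (B *ᵥ (affIFS A t i z' - affIFS A t j y))‖
    by_cases hij : i = j
    · subst hij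
      have hz'w : z' ∉ mapWord (affIFS A t) w '' Λ := by
        rintro ⟨z'', hz'', rfl⟩
        exact hzw ⟨z'', hz'', rfl⟩
      rw [← WithLp.ofLp_sub, affIFS_sub, ← mul_assoc]
      convert ih (B * A i) ⟨x', hx', rfl⟩ hz' hz'w using 2
      change toE2 (B *ᵥ (A i *ᵥ _)) = _
      rw [Matrix.mulVec_mulVec]
    · have hy : y ∈ F := hΛF (mapWord_image_subset hΛ w ⟨x', hx', rfl⟩)
      have hgap := hsep i j hij _ ⟨z', hΛF hz', rfl⟩ _ ⟨y, hy, rfl⟩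
      rw [dist_eq_norm] at hgap
      calc g * alpha2 (B * (A j * listProd A w))
          ≤ g * (alpha2 B * alpha1 (A j * listProd A w)) := by gcongr; exact alpha2_mul_le _ _
        _ ≤ g * (alpha2 B * 1) := by
          gcongr
          · exact alpha2_nonneg B
          · exact l2_opNorm_listProd_le_one hA (j :: w)
        _ ≤ alpha2 B * ‖affIFS A t i z' - affIFS A t j y‖ := by
          rw [mul_one, mul_comm]; gcongr; exact alpha2_nonneg B
        _ ≤ _ := alpha2_mul_norm_le B _

theorem mem_image_mapWord_of_dist_lt {Λ F : Set E2} {g : ℝ} (hA : ∀ i, ‖A i‖ ≤ 1)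
    (hΛ : Λ = ⋃ i, affIFS A t i '' Λ) (hΛF : Λ ⊆ F) (hg : 0 ≤ g)
    (hsep : ∀ i j, i ≠ j → ∀ p ∈ affIFS A t i '' F, ∀ q ∈ affIFS A t j '' F, g ≤ dist p q)
    {w : List (Fin N)} {x z : E2} (hx : x ∈ mapWord (affIFS A t) w '' Λ) (hz : z ∈ Λ)
    (hzx : dist z x < g * alpha2 (listProd A w)) : z ∈ mapWord (affIFS A t) w '' Λ := by
  by_contra hzw
  have h := mul_alpha2_le_norm_mulVec_sub_of_notMem hA hΛ hΛF hg hsep w 1 hx hz hzw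
  rw [one_mul, Matrix.one_mulVec] at h
  exact (h.trans_lt (dist_eq_norm z x ▸ hzx)).false

theorem dist_le_of_mem_image_mapWord {Λ : Set E2} {ess : (ℕ → Fin N) → Submodule ℝ E2} {K : ℝ}
    (hK : ∀ (i : ℕ → Fin N) (w : List (Fin N)) (v : E2), toE2 (listProd A w *ᵥ v) ∈ ess i →
      ‖toE2 (listProd A w *ᵥ v)‖ ≤ K * alpha2 (listProd A w) * ‖v‖)
    (hK0 : 0 ≤ K) (hΛ : Bornology.IsBounded Λ) {i : ℕ → Fin N} {w : List (Fin N)} {x z : E2}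
    (hx : x ∈ mapWord (affIFS A t) w '' Λ) (hz : z ∈ mapWord (affIFS A t) w '' Λ)
    (hzx : z - x ∈ ess i) : dist z x ≤ K * diam Λ * alpha2 (listProd A w) := by
  obtain ⟨x', hx', rfl⟩ := hx
  obtain ⟨z', hz', rfl⟩ := hz
  rw [mapWord_sub] at hzx
  rw [dist_eq_norm, mapWord_sub, mul_right_comm]
  refine (hK i w _ hzx).trans ?_
  gcongr
  · exact mul_nonneg hK0 (alpha2_nonneg _)
  · exact dist_eq_norm z' x' ▸ dist_le_diam_of_mem hΛ hz' hx'

end AffineIFS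

theorem statement7_general
    {N : ℕ} (A : Fin N → Matrix (Fin 2) (Fin 2) ℝ)
    (hA : ∀ i, alpha1 (A i) < 1 ∧ (A i).det ≠ 0)
    (t : Fin N → E2) (Λ : Set E2) (hΛ : IsAttractor (affIFS A t) Λ)
    (ess : (ℕ → Fin N) → Submodule ℝ E2) (hess : IsStrongStableDirections A ess)
    (hssc : SSC (affIFS A t)) :
    ∃ c₁ > (0:ℝ), ∀ (i : ℕ → Fin N), ∀ x ∈ Λ, ∀ w : List (Fin N), w ≠ [] →
      x ∈ mapWord (affIFS A t) w '' Λ →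
      {z | z ∈ Λ ∧ z - x ∈ ess i ∧ dist z x ≤ c₁⁻¹ * alpha2 (listProd A w)} ⊆
          (mapWord (affIFS A t) w '' Λ) ∩ {z | z - x ∈ ess i} ∧
      (mapWord (affIFS A t) w '' Λ) ∩ {z | z - x ∈ ess i} ⊆
          {z | z ∈ Λ ∧ z - x ∈ ess i ∧ dist z x ≤ c₁ * alpha2 (listProd A w)} := by
  obtain ⟨hΛc, -, hΛeq⟩ := hΛ
  obtain ⟨O, -, hO0, hOb, hOO, hOdisj⟩ := hssc
  have hA1 : ∀ i, ‖A i‖ < 1 := fun i => (hA i).1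
  have hdet : ∀ i, (A i).det ≠ 0 := fun i => (hA i).2
  obtain ⟨K, hK0, hK⟩ := exists_norm_listProd_mulVec_le_alpha2 hdet hess
  have hcO : IsCompact (closure O) := hOb.isCompact_closure
  have hΛO : Λ ⊆ closure O := subset_of_mapsTo_of_contractingWith hcO hO0.closure
    (fun i => mapsTo_iff_image_subset.mpr ((hOO i).trans subset_closure))
    (fun i => ⟨_, contractingWith_affIFS hA1 i⟩) hΛc hΛeq.subset
  obtain ⟨g, hg, hgap⟩ := exists_pos_le_dist_of_pairwise_disjoint
    (fun i => hcO.image (contractingWith_affIFS (t := t) hA1 i).2.continuous) hOdisj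
  have hc₁ : (max (2 / g) (K * diam Λ))⁻¹ < g :=
    (inv_anti₀ (by positivity) (le_max_left _ _)).trans_lt (by rw [inv_div]; linarith)
  refine ⟨max (2 / g) (K * diam Λ), lt_max_of_lt_left (by positivity),
    fun i x _ w _ hxw => ⟨fun z ⟨hzΛ, hzx, hzdist⟩ => ⟨?_, hzx⟩, fun z ⟨hzw, hzx⟩ => ?_⟩⟩
  · refine mem_image_mapWord_of_dist_lt (fun i => (hA1 i).le) hΛeq hΛO hg.le hgap hxw hzΛ ?_
    exact hzdist.trans_lt (by gcongr; exact alpha2_pos (det_listProd_ne_zero hdet w))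
  · refine ⟨mapWord_image_subset hΛeq w hzw, hzx, ?_⟩
    refine (dist_le_of_mem_image_mapWord hK hK0.le hΛc.isBounded hxw hzw hzx).trans ?_
    gcongr
    exacts [alpha2_nonneg _, le_max_right _ _]

/-- **Lemma.** Under dominated splitting and strong separation there is `c₁ > 0` such that
for every `i ∈ Σ⁺`, `x ∈ Λ`, and nonempty word `w` with `x ∈ f_w(Λ)`:
`B^{ss}_{c₁⁻¹ α₂(A_w)}(x,i) ⊆ f_w(Λ) ∩ (x + e_ss(i)) ⊆ B^{ss}_{c₁ α₂(A_w)}(x,i)`,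
where `B^{ss}_r(x,i) = {z ∈ Λ ∩ (x + e_ss(i)) : |z - x| ≤ r}`. -/
theorem statement7
    {N : ℕ} (A : Fin N → Matrix (Fin 2) (Fin 2) ℝ)
    (hA : ∀ i, alpha1 (A i) < 1 ∧ (A i).det ≠ 0)
    (t : Fin N → E2) (Λ : Set E2) (hΛ : IsAttractor (affIFS A t) Λ)
    (ess : (ℕ → Fin N) → Submodule ℝ E2) (hess : IsStrongStableDirections A ess)
    (hds : DominatedSplitting A) (hssc : SSC (affIFS A t)) :
    ∃ c₁ > (0:ℝ), ∀ (i : ℕ → Fin N), ∀ x ∈ Λ, ∀ w : List (Fin N), w ≠ [] →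
      x ∈ mapWord (affIFS A t) w '' Λ →
      {z | z ∈ Λ ∧ z - x ∈ ess i ∧ dist z x ≤ c₁⁻¹ * alpha2 (listProd A w)} ⊆
          (mapWord (affIFS A t) w '' Λ) ∩ {z | z - x ∈ ess i} ∧
      (mapWord (affIFS A t) w '' Λ) ∩ {z | z - x ∈ ess i} ⊆
          {z | z ∈ Λ ∧ z - x ∈ ess i ∧ dist z x ≤ c₁ * alpha2 (listProd A w)} :=
  statement7_general A hA t Λ hΛ ess hess hssc

end
end

section
/- Suppose each A_i is lower triangular, A_i = [[a_i, 0],[b_i, c_i]] with 0 < |a_i|, |c_i| < 1, and |a_i| < |c_i| for every i. Then for every i = (i₀, i₁, …) ∈ Σ⁺ the strong-stable direction e_ss(i) is the line spanned by the vector (1, ϑ(i)), where ϑ(i) = −∑_{n=0}^∞ (b_{iₙ} a_{i_{n−1}} ⋯ a_{i₀})/(c_{iₙ} c_{i_{n−1}} ⋯ c_{i₀}); consequently ϑ(i) = g_{i₀}(ϑ(σ i)) for g_j(x) = (a_j/c_j) x − b_j/c_j, so the set of slopes {ϑ(i) : i ∈ Σ⁺} is the attractor of the self-similar IFS {g_j}_{j=1}^N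 on ℝ. Equivalently, A_{i₀}·(1, ϑ(i)) = a_{i₀}·(1, ϑ(σ i)) for every i ∈ Σ⁺. -/
open MeasureTheory Filter Metric Set
open scoped ENNReal Topology NNReal

noncomputable section

/-! The line through `(1, t)` is mapped by `A_j` onto the line through `(1, t')` exactly when
`b_j + c_j t = a_j t'`. The series `ϑ` solves this equation along every orbit,
`ϑ(x) = g_{x₀}(ϑ(σx))`, and is bounded since `|a_j / c_j| ≤ r < 1`. Given such a bounded
invariant slope, `A_{x_{n-1}} ⋯ A_{x₀}` is lower triangular with diagonal `∏ a`, `∏ c` and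
off-diagonal entry `(∏ a) ϑ(σⁿx) - (∏ c) ϑ(x)`, so its norm is `O(∏ |c|)`. For `v` in the
strong-stable line, the second coordinate of the image then gives
`(∏ |c|) |v₁ - ϑ(x) v₀| = o(∏ |c|)`, i.e. `v₁ = ϑ(x) v₀`. -/

open Finset Matrix

lemma norm_toE2_le (w : Fin 2 → ℝ) : ‖toE2 w‖ ≤ |w 0| + |w 1| := by
  have h := EuclideanSpace.real_norm_sq_eq (toE2 w)
  simp only [Fin.sum_univ_two, toE2, PiLp.toLp_apply] at h ⊢
  refine le_of_pow_le_pow_left₀ two_ne_zero (by positivity) ?_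
  nlinarith [abs_nonneg (w 0), abs_nonneg (w 1), sq_abs (w 0), sq_abs (w 1)]

lemma alpha1_lowerTriangular_le (p q s : ℝ) : alpha1 !![p, 0; q, s] ≤ |p| + |q| + |s| := by
  refine ContinuousLinearMap.opNorm_le_bound _ (by positivity) fun v => ?_
  have h0 : |v 0| ≤ ‖v‖ := PiLp.norm_apply_le v 0
  have h1 : |v 1| ≤ ‖v‖ := PiLp.norm_apply_le v 1
  have hv : ‖toE2 (!![p, 0; q, s] *ᵥ v)‖ ≤ |p * v 0| + |q * v 0 + s * v 1| := by
    simpa [mulVec, dotProduct, Fin.sum_univ_two] using norm_toE2_le (!![p, 0; q, s] *ᵥ v)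
  calc ‖toE2 (!![p, 0; q, s] *ᵥ v)‖ ≤ |p * v 0| + |q * v 0 + s * v 1| := hv
    _ ≤ |p| * |v 0| + (|q| * |v 0| + |s| * |v 1|) := by
        rw [abs_mul, ← abs_mul q, ← abs_mul s]; gcongr; exact abs_add_le _ _
    _ ≤ (|p| + |q| + |s|) * ‖v‖ := by nlinarith [abs_nonneg p, abs_nonneg q, abs_nonneg s]

lemma lowerTriangular_mulVec_eq {a b c t t' : ℝ} (h : b + c * t = a * t') :
    !![a, 0; b, c] *ᵥ ![1, t] = a • ![1, t'] := by
  ext i; fin_cases i <;> simp [mulVec, dotProduct, h]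

lemma prod_lowerTriangular_eq {a b c t : ℕ → ℝ} (h : ∀ k, b k + c k * t k = a k * t (k + 1))
    (n : ℕ) :
    ((List.range n).reverse.map fun k => !![a k, 0; b k, c k]).prod =
      !![∏ k ∈ range n, a k, 0;
        (∏ k ∈ range n, a k) * t n - (∏ k ∈ range n, c k) * t 0, ∏ k ∈ range n, c k] := by
  induction n with
  | zero => ext i j; fin_cases i <;> fin_cases j <;> simp
  | succ n ih =>
    rw [List.range_succ, List.reverse_append, List.map_append, List.prod_append, ih]
    ext i j
    fin_cases i <;> fin_cases j <;> simp [prod_range_succ]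
    · ring
    · linear_combination (∏ k ∈ range n, a k) * h n
    · ring

lemma shift_iterate_apply {N : ℕ} (x : ℕ → Fin N) (n m : ℕ) : shift^[n] x m = x (m + n) := by
  induction n generalizing x with
  | zero => rfl
  | succ n ih => rw [Function.iterate_succ_apply, ih]; simp only [shift, Nat.add_assoc]

section LowerTriangular

variable {N : ℕ} {A : Fin N → Matrix (Fin 2) (Fin 2) ℝ} {a b c : Fin N → ℝ}
  {t : (ℕ → Fin N) → ℝ}

lemma prodRev_eq_of_invariant (hA : ∀ i, A i = !![a i, 0; b i, c i])
    (ht : ∀ x, b (x 0) + c (x 0) * t x = a (x 0) * t (shift x)) (x : ℕ → Fin N) (n : ℕ) :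
    prodRev A x n = !![∏ k ∈ range n, a (x k), 0;
      (∏ k ∈ range n, a (x k)) * t (shift^[n] x) - (∏ k ∈ range n, c (x k)) * t x,
      ∏ k ∈ range n, c (x k)] := by
  simp only [prodRev, listProd, List.map_map, Function.comp_def, hA]
  refine prod_lowerTriangular_eq (t := fun k => t (shift^[k] x)) (fun k => ?_) n
  simpa [shift_iterate_apply, Function.iterate_succ_apply'] using ht (shift^[k] x)

lemma abs_prod_le_pow_mul {r : ℝ} (har : ∀ i, |a i| ≤ r * |c i|) (x : ℕ → Fin N) (n : ℕ) :
    |∏ k ∈ range n, a (x k)| ≤ r ^ n * ∏ k ∈ range n, |c (x k)| := by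
  calc |∏ k ∈ range n, a (x k)| ≤ ∏ k ∈ range n, (r * |c (x k)|) := by
        rw [abs_prod]; exact prod_le_prod (fun _ _ => abs_nonneg _) fun k _ => har (x k)
    _ = r ^ n * ∏ k ∈ range n, |c (x k)| := by rw [prod_mul_distrib, prod_const, card_range]

lemma alpha1_prodRev_le (hA : ∀ i, A i = !![a i, 0; b i, c i])
    (ht : ∀ x, b (x 0) + c (x 0) * t x = a (x 0) * t (shift x)) {K : ℝ} (hK : ∀ x, |t x| ≤ K)
    (hac : ∀ i, |a i| ≤ |c i|) (x : ℕ → Fin N) (n : ℕ) :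
    alpha1 (prodRev A x n) ≤ (2 + 2 * K) * ∏ k ∈ range n, |c (x k)| := by
  have hpa : |∏ k ∈ range n, a (x k)| ≤ ∏ k ∈ range n, |c (x k)| := by
    simpa using abs_prod_le_pow_mul (r := 1) (by simpa using hac) x n
  have hpc : |∏ k ∈ range n, c (x k)| = ∏ k ∈ range n, |c (x k)| := abs_prod _ _
  have hq : |(∏ k ∈ range n, a (x k)) * t (shift^[n] x) - (∏ k ∈ range n, c (x k)) * t x| ≤
      |∏ k ∈ range n, a (x k)| * |t (shift^[n] x)| + |∏ k ∈ range n, c (x k)| * |t x| :=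
    (abs_sub _ _).trans_eq (by rw [abs_mul, abs_mul])
  rw [prodRev_eq_of_invariant hA ht]
  refine (alpha1_lowerTriangular_le _ _ _).trans ?_
  nlinarith [hK x, hK (shift^[n] x), abs_nonneg (∏ k ∈ range n, a (x k)), abs_nonneg (t x),
    abs_nonneg (t (shift^[n] x))]

lemma abs_sub_mul_le_of_strongStable (hA : ∀ i, A i = !![a i, 0; b i, c i])
    (hc : ∀ i, c i ≠ 0) (ht : ∀ x, b (x 0) + c (x 0) * t x = a (x 0) * t (shift x))
    {K r : ℝ} (hK : ∀ x, |t x| ≤ K) (hr : r ≤ 1) (har : ∀ i, |a i| ≤ r * |c i|)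
    {C δ : ℝ} (hC : 0 ≤ C) {x : ℕ → Fin N} {v : E2} (n : ℕ)
    (hv : ‖toE2 (prodRev A x n *ᵥ v)‖ ≤ C * Real.exp (-δ * n) * alpha1 (prodRev A x n) * ‖v‖) :
    |v 1 - v 0 * t x| ≤ (C * (2 + 2 * K) * Real.exp (-δ * n) + K * r ^ n) * ‖v‖ := by
  set pa := ∏ k ∈ range n, a (x k)
  set pc := ∏ k ∈ range n, c (x k)
  have hpc : 0 < |pc| := abs_pos.mpr (prod_ne_zero_iff.mpr fun k _ => hc (x k))
  have hpa : |pa| ≤ r ^ n * |pc| := (abs_prod_le_pow_mul har x n).trans_eq (by rw [abs_prod])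
  have hr0 : 0 ≤ r :=
    nonneg_of_mul_nonneg_left ((abs_nonneg _).trans (har (x 0))) (abs_pos.mpr (hc (x 0)))
  have hac : ∀ i, |a i| ≤ |c i| := fun i =>
    (har i).trans (mul_le_of_le_one_left (abs_nonneg _) hr)
  have hα : alpha1 (prodRev A x n) ≤ (2 + 2 * K) * |pc| :=
    (alpha1_prodRev_le hA ht hK hac x n).trans_eq (by rw [abs_prod])
  have hcoord : pc * (v 1 - v 0 * t x) = (prodRev A x n *ᵥ v) 1 - pa * t (shift^[n] x) * v 0 := by
    rw [prodRev_eq_of_invariant hA ht]; simp [mulVec, dotProduct, Fin.sum_univ_two]; ring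
  have h1 : |(prodRev A x n *ᵥ v) 1| ≤ ‖toE2 (prodRev A x n *ᵥ v)‖ := by
    simpa [toE2] using PiLp.norm_apply_le (toE2 (prodRev A x n *ᵥ v)) 1
  have hv0 : |v 0| ≤ ‖v‖ := PiLp.norm_apply_le v 0
  refine le_of_mul_le_mul_left ?_ hpc
  calc |pc| * |v 1 - v 0 * t x|
      ≤ |(prodRev A x n *ᵥ v) 1| + |pa| * |t (shift^[n] x)| * |v 0| := by
        rw [← abs_mul, hcoord, ← abs_mul, ← abs_mul]; exact abs_sub _ _
    _ ≤ C * Real.exp (-δ * n) * ((2 + 2 * K) * |pc|) * ‖v‖ + r ^ n * |pc| * K * ‖v‖ := by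
        have hK0 : 0 ≤ K := (abs_nonneg _).trans (hK x)
        gcongr
        exacts [h1.trans (hv.trans (by gcongr)), hK _]
    _ = |pc| * ((C * (2 + 2 * K) * Real.exp (-δ * n) + K * r ^ n) * ‖v‖) := by ring

theorem IsStrongStableDirections.eq_span_of_invariant {ess : (ℕ → Fin N) → Submodule ℝ E2}
    (hess : IsStrongStableDirections A ess) (hA : ∀ i, A i = !![a i, 0; b i, c i])
    (hc : ∀ i, c i ≠ 0) (ht : ∀ x, b (x 0) + c (x 0) * t x = a (x 0) * t (shift x))
    {K r : ℝ} (hK : ∀ x, |t x| ≤ K) (hr : r < 1) (har : ∀ i, |a i| ≤ r * |c i|)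
    (x : ℕ → Fin N) : ess x = Submodule.span ℝ {toE2 ![1, t x]} := by
  obtain ⟨hrank, -, C, hC, δ, hδ, hbound⟩ := hess
  have hne : toE2 ![1, t x] ≠ 0 := fun h => by simpa [toE2] using congrArg (· 0) h
  refine Submodule.eq_of_le_of_finrank_le (fun v hv => ?_)
    (by rw [finrank_span_singleton hne, hrank x])
  have hr0 : 0 ≤ r :=
    nonneg_of_mul_nonneg_left ((abs_nonneg _).trans (har (x 0))) (abs_pos.mpr (hc (x 0)))
  have hexp : Tendsto (fun n : ℕ => Real.exp (-δ * n)) atTop (𝓝 0) := by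
    simp_rw [neg_mul]
    exact Real.tendsto_exp_neg_atTop_nhds_zero.comp
      (tendsto_natCast_atTop_atTop.const_mul_atTop hδ)
  have hlim : Tendsto (fun n : ℕ => (C * (2 + 2 * K) * Real.exp (-δ * n) + K * r ^ n) * ‖v‖)
      atTop (𝓝 0) := by
    simpa using ((hexp.const_mul _).add
      ((tendsto_pow_atTop_nhds_zero_of_lt_one hr0 hr).const_mul K)).mul_const ‖v‖
  have hs : v 1 - v 0 * t x = 0 := abs_nonpos_iff.mp <| ge_of_tendsto' hlim fun n =>
    abs_sub_mul_le_of_strongStable hA hc ht hK hr.le har hC.le n (hbound x n v hv)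
  rw [Submodule.mem_span_singleton]
  exact ⟨v 0, by ext i; fin_cases i <;> simp [toE2]; linarith⟩

end LowerTriangular

lemma range_eq_iUnion_image_of_eq_comp_shift {N : ℕ} {X : Type*} {f : (ℕ → Fin N) → X}
    {g : Fin N → X → X} (h : ∀ x, f x = g (x 0) (f (shift x))) :
    Set.range f = ⋃ j, g j '' Set.range f := by
  ext y
  simp only [Set.mem_range, Set.mem_iUnion, Set.mem_image]
  constructor
  · rintro ⟨x, rfl⟩
    exact ⟨x 0, f (shift x), ⟨shift x, rfl⟩, (h x).symm⟩
  · rintro ⟨j, _, ⟨x, rfl⟩, rfl⟩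
    exact ⟨fun n => Nat.casesOn n j x, h _⟩

/-- In the paper's notation, `ϑ = -slopeSeries (a / c) (b / c)`. -/
def slopeSeries {N : ℕ} (ρ β : Fin N → ℝ) (x : ℕ → Fin N) : ℝ :=
  ∑' n, β (x n) * ∏ k ∈ range n, ρ (x k)

section SlopeSeries

variable {N : ℕ} {ρ β : Fin N → ℝ} {r B : ℝ}

lemma abs_slopeSeries_term_le (hρ : ∀ i, |ρ i| ≤ r) (hβ : ∀ i, |β i| ≤ B) (x : ℕ → Fin N)
    (n : ℕ) : |β (x n) * ∏ k ∈ range n, ρ (x k)| ≤ B * r ^ n := by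
  rw [abs_mul, abs_prod]
  gcongr
  · exact (abs_nonneg _).trans (hβ (x 0))
  · exact hβ _
  · exact (prod_le_prod (fun _ _ => abs_nonneg _) fun k _ => hρ (x k)).trans_eq
      (by rw [prod_const, card_range])

lemma summable_slopeSeries_term (hρ : ∀ i, |ρ i| ≤ r) (hβ : ∀ i, |β i| ≤ B) (hr : r < 1)
    (x : ℕ → Fin N) : Summable fun n => β (x n) * ∏ k ∈ range n, ρ (x k) := by
  refine Summable.of_norm_bounded ((summable_geometric_of_lt_one ?_ hr).mul_left B)
    (abs_slopeSeries_term_le hρ hβ x)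
  exact (abs_nonneg _).trans (hρ (x 0))

lemma abs_slopeSeries_le (hρ : ∀ i, |ρ i| ≤ r) (hβ : ∀ i, |β i| ≤ B) (hr : r < 1)
    (x : ℕ → Fin N) : |slopeSeries ρ β x| ≤ B / (1 - r) := by
  have hr0 : 0 ≤ r := (abs_nonneg _).trans (hρ (x 0))
  exact (tsum_of_norm_bounded (f := fun n => β (x n) * ∏ k ∈ range n, ρ (x k))
    ((hasSum_geometric_of_lt_one hr0 hr).mul_left B) (abs_slopeSeries_term_le hρ hβ x)).trans_eq
    (div_eq_mul_inv _ _).symm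

lemma slopeSeries_eq (hρ : ∀ i, |ρ i| ≤ r) (hβ : ∀ i, |β i| ≤ B) (hr : r < 1)
    (x : ℕ → Fin N) : slopeSeries ρ β x = β (x 0) + ρ (x 0) * slopeSeries ρ β (shift x) := by
  rw [slopeSeries, (summable_slopeSeries_term hρ hβ hr x).tsum_eq_zero_add, slopeSeries,
    ← tsum_mul_left]
  congr 1
  · simp
  · refine tsum_congr fun n => ?_
    rw [prod_range_succ']
    simp only [shift]
    ring

lemma continuous_slopeSeries (hρ : ∀ i, |ρ i| ≤ r) (hβ : ∀ i, |β i| ≤ B) (hr : r < 1) :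
    Continuous (slopeSeries ρ β) := by
  -- working at a point `x` provides an index, hence `0 ≤ r`
  refine continuous_iff_continuousAt.mpr fun x => Continuous.continuousAt ?_
  have hr0 : 0 ≤ r := (abs_nonneg _).trans (hρ (x 0))
  have hcoord : ∀ (f : Fin N → ℝ) (k : ℕ), Continuous fun y : ℕ → Fin N => f (y k) :=
    fun f k => continuous_of_discreteTopology.comp (continuous_apply k)
  exact continuous_tsum (fun n => (hcoord β n).mul (continuous_finsetProd _ fun k _ => hcoord ρ k))
    ((summable_geometric_of_lt_one hr0 hr).mul_left B) fun n y => abs_slopeSeries_term_le hρ hβ y n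

end SlopeSeries

theorem statement16_general
    {N : ℕ} (hN : 0 < N) (a b c : Fin N → ℝ)
    (hc : ∀ i, 0 < |c i| ∧ |c i| < 1)
    (A : Fin N → Matrix (Fin 2) (Fin 2) ℝ)
    (hAdef : ∀ i, A i = !![a i, 0; b i, c i])
    (hac : ∀ i, |a i| < |c i|)
    (ess : (ℕ → Fin N) → Submodule ℝ E2) (hess : IsStrongStableDirections A ess)
    (ϑ : (ℕ → Fin N) → ℝ)
    (hϑ : ∀ x, ϑ x = -∑' n : ℕ,
      (b (x n) * ∏ k ∈ Finset.range n, a (x k)) / ∏ k ∈ Finset.range (n + 1), c (x k)) :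
    (∀ x, ess x = Submodule.span ℝ {toE2 ![1, ϑ x]}) ∧
    (∀ x, ϑ x = (a (x 0) / c (x 0)) * ϑ (shift x) - b (x 0) / c (x 0)) ∧
    (IsCompact (Set.range ϑ) ∧ (Set.range ϑ).Nonempty ∧
      Set.range ϑ = ⋃ j, (fun y => (a j / c j) * y - b j / c j) '' Set.range ϑ) ∧
    (∀ x, toE2 ((A (x 0)).mulVec (toE2 ![1, ϑ x])) = a (x 0) • toE2 ![1, ϑ (shift x)]) := by
  have : Nonempty (Fin N) := ⟨⟨0, hN⟩⟩
  have hc0 : ∀ i, c i ≠ 0 := fun i => abs_pos.mp (hc i).1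
  obtain ⟨i₀, hρ⟩ := Finite.exists_max fun i => |a i / c i|
  obtain ⟨j₀, hβ⟩ := Finite.exists_max fun i => |b i / c i|
  have hr : |a i₀ / c i₀| < 1 := by rw [abs_div, div_lt_one (hc i₀).1]; exact hac i₀
  have har : ∀ i, |a i| ≤ |a i₀ / c i₀| * |c i| := fun i => by
    rw [← div_le_iff₀ (hc i).1, ← abs_div]; exact hρ i
  have hϑ_eq : ∀ x, ϑ x = -slopeSeries (fun i => a i / c i) (fun i => b i / c i) x := by
    intro x
    rw [hϑ, slopeSeries]
    congr 1
    refine tsum_congr fun n => ?_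
    rw [prod_range_succ, prod_div_distrib]
    field_simp
  have hrec : ∀ x, ϑ x = (a (x 0) / c (x 0)) * ϑ (shift x) - b (x 0) / c (x 0) := fun x => by
    rw [hϑ_eq, hϑ_eq, slopeSeries_eq hρ hβ hr]; ring
  have hinv : ∀ x, b (x 0) + c (x 0) * ϑ x = a (x 0) * ϑ (shift x) := fun x => by
    rw [hrec x]; field_simp [hc0 (x 0)]; ring
  have hbound : ∀ x, |ϑ x| ≤ |b j₀ / c j₀| / (1 - |a i₀ / c i₀|) := fun x => by
    rw [hϑ_eq, abs_neg]; exact abs_slopeSeries_le hρ hβ hr x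
  refine ⟨hess.eq_span_of_invariant hAdef hc0 hinv hbound hr har, hrec,
    ⟨isCompact_range ?_, Set.range_nonempty ϑ, range_eq_iUnion_image_of_eq_comp_shift hrec⟩,
    fun x => ?_⟩
  · exact (continuous_slopeSeries hρ hβ hr).neg.congr fun x => (hϑ_eq x).symm
  · simp only [toE2, WithLp.ofLp_toLp]
    rw [hAdef, lowerTriangular_mulVec_eq (hinv x), WithLp.toLp_smul]

/-- **Lemma.** For lower triangular matrices with `|a_i| < |c_i|`, the strong-stable
direction of `i ∈ Σ⁺` is spanned by `(1, ϑ(i))` where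
`ϑ(i) = -∑ₙ (b_{iₙ} a_{i_{n-1}}⋯a_{i₀})/(c_{iₙ}⋯c_{i₀})`; consequently
`ϑ(i) = g_{i₀}(ϑ(σi))` for `g_j(x) = (a_j/c_j)x - b_j/c_j`, so the (compact) set of slopes
is the attractor of the self-similar IFS `{g_j}`; equivalently
`A_{i₀}·(1, ϑ(i)) = a_{i₀}·(1, ϑ(σi))`. -/
theorem statement16
    {N : ℕ} (hN : 0 < N) (a b c : Fin N → ℝ)
    (ha : ∀ i, 0 < |a i| ∧ |a i| < 1) (hc : ∀ i, 0 < |c i| ∧ |c i| < 1)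
    (A : Fin N → Matrix (Fin 2) (Fin 2) ℝ)
    (hAdef : ∀ i, A i = !![a i, 0; b i, c i])
    (hcontr : ∀ i, alpha1 (A i) < 1)
    (hac : ∀ i, |a i| < |c i|)
    (ess : (ℕ → Fin N) → Submodule ℝ E2) (hess : IsStrongStableDirections A ess)
    (ϑ : (ℕ → Fin N) → ℝ)
    (hϑ : ∀ x, ϑ x = -∑' n : ℕ,
      (b (x n) * ∏ k ∈ Finset.range n, a (x k)) / ∏ k ∈ Finset.range (n + 1), c (x k)) :
    (∀ x, ess x = Submodule.span ℝ {toE2 ![1, ϑ x]}) ∧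
    (∀ x, ϑ x = (a (x 0) / c (x 0)) * ϑ (shift x) - b (x 0) / c (x 0)) ∧
    (IsCompact (Set.range ϑ) ∧ (Set.range ϑ).Nonempty ∧
      Set.range ϑ = ⋃ j, (fun y => (a j / c j) * y - b j / c j) '' Set.range ϑ) ∧
    (∀ x, toE2 ((A (x 0)).mulVec (toE2 ![1, ϑ x])) = a (x 0) • toE2 ![1, ϑ (shift x)]) :=
  statement16_general hN a b c hc A hAdef hac ess hess ϑ hϑ

end
end
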